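/- arXiv:1908.11488 — 3 statements merged into one kernel-verified Lean document; each statement's English description precedes it below -/
import Mathlib

section
/- There exists n₀ ∈ ℕ such that the following holds for every finite simple graph G with n ≥ n₀ vertices and m edges and every real p ∈ (0, 1]: if p² m ≥ 400 (log₂ n)² and every vertex of G has degree at most m p / (20 log₂ n), and a random subset S of the vertices is generated by including each vertex independently with probability p, then with probability at least 1 − 1/n the number of edges of G with both endpoints in S is at most 6 p² m. -/
/-!
Let `X` count the edges inside `S` and put `k = ⌈log₂ n⌉`. Expanding `X ^ k` over `k`-tuples of
edges, `𝔼[X ^ k]` is the sum of `p ^ #(vertices covered by the tuple)`. Appending an edge `e` to a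
tuple covering a set `W` of at most `2k` vertices multiplies the weight by `p ^ #(e \ W)`, and
`∑ₑ p ^ #(e \ W) ≤ #W² + p ∑_{w ∈ W} deg w + p² m ≤ 2 p² m` by the two hypotheses. Hence
`𝔼[X ^ k] ≤ (2 p² m) ^ k`, and Markov's inequality for `X ^ k` gives
`ℙ(X > 6 p² m) ≤ 3 ^ (-k) ≤ 1 / n`.
-/

open MeasureTheory Finset
open scoped ENNReal

set_option linter.deprecated false in
noncomputable abbrev bernoulliPi (V : Type*) [Fintype V] (p : ℝ) (hp1 : p ≤ 1) :
    Measure (V → Bool) :=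
  Measure.pi fun _ : V => (PMF.bernoulli p.toNNReal (Real.toNNReal_le_one.mpr hp1)).toMeasure

lemma bernoulliPi_forall_eq_true {V : Type*} [Fintype V] {p : ℝ} (hp1 : p ≤ 1) (T : Finset V) :
    bernoulliPi V p hp1 {ω | ∀ v ∈ T, ω v = true} = ENNReal.ofReal p ^ #T := by
  have hT : {ω : V → Bool | ∀ v ∈ T, ω v = true} = (T : Set V).pi fun _ => {true} := by
    ext ω; simp
  rw [hT, Measure.pi_pi_finset, prod_const,
    PMF.toMeasure_apply_singleton _ _ (measurableSet_singleton _)]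
  rfl

lemma measure_lt_le_of_lintegral_pow_le {Ω : Type*} [MeasurableSpace Ω] {μ : Measure Ω}
    {N : Ω → ℕ} (hN : Measurable N) {T r : ℝ} (hr : 0 < r) {k : ℕ}
    (hmoment : ∫⁻ ω, (N ω : ℝ≥0∞) ^ k ∂μ ≤ ENNReal.ofReal T ^ k) :
    μ {ω | r < N ω} ≤ ENNReal.ofReal (T / r) ^ k := by
  have hsub : {ω | r < N ω} ⊆ {ω | ENNReal.ofReal r ^ k ≤ (N ω : ℝ≥0∞) ^ k} :=
    fun ω (hω : r < N ω) => pow_le_pow_left'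
      ((ENNReal.ofReal_le_ofReal hω.le).trans_eq (ENNReal.ofReal_natCast _)) k
  calc μ {ω | r < N ω} ≤ (∫⁻ ω, (N ω : ℝ≥0∞) ^ k ∂μ) / ENNReal.ofReal r ^ k :=
        (measure_mono hsub).trans <| meas_ge_le_lintegral_div
          ((measurable_from_nat.comp hN).pow_const k).aemeasurable (by positivity) (by simp)
    _ ≤ ENNReal.ofReal T ^ k / ENNReal.ofReal r ^ k := by gcongr
    _ = ENNReal.ofReal (T / r) ^ k := by
        rw [ENNReal.ofReal_div_of_pos hr, div_eq_mul_inv, div_eq_mul_inv, mul_pow,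
          ENNReal.inv_pow]

section Moments

variable {V α : Type*} [DecidableEq V] [Fintype α]

lemma lintegral_card_pow_eq_sum [Fintype V] (μ : Measure (V → Bool)) (F : α → Finset V)
    (k : ℕ) :
    ∫⁻ ω, (#{x | ∀ v ∈ F x, ω v = true} : ℝ≥0∞) ^ k ∂μ =
      ∑ t : Fin k → α, μ {ω | ∀ v ∈ univ.biUnion fun i => F (t i), ω v = true} := by
  have hpow : ∀ ω : V → Bool, (#{x | ∀ v ∈ F x, ω v = true} : ℝ≥0∞) ^ k =
      ∑ t : Fin k → α,
        {ω | ∀ v ∈ univ.biUnion fun i => F (t i), ω v = true}.indicator 1 ω := by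
    intro ω
    simp only [card_filter, Nat.cast_sum, Nat.cast_ite, Nat.cast_one, Nat.cast_zero,
      Fintype.sum_pow, Fintype.prod_boole, Set.indicator_apply]
    simp [forall_comm (α := Fin k)]
  simp_rw [hpow]
  rw [lintegral_finsetSum _ fun t _ => measurable_one.indicator (Set.toFinite _).measurableSet]
  simp_rw [lintegral_indicator_one (Set.toFinite _).measurableSet]

lemma sum_pow_card_biUnion_le {q T : ℝ} (hq : 0 ≤ q) (F : α → Finset V) {s k : ℕ}
    (hF : ∀ x, #(F x) ≤ s)
    (hstep : ∀ W : Finset V, #W ≤ s * k → ∑ x, q ^ #(F x \ W) ≤ T) :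
    ∑ t : Fin k → α, q ^ #(univ.biUnion fun i => F (t i)) ≤ T ^ k := by
  have hT : 0 ≤ T := (sum_nonneg fun x _ => pow_nonneg hq _).trans (hstep ∅ (by simp))
  suffices ∀ j ≤ k, ∑ t : Fin j → α, q ^ #(univ.biUnion fun i => F (t i)) ≤ T ^ j from
    this k le_rfl
  intro j
  induction j with
  | zero => simp
  | succ j ih =>
    intro hj
    calc ∑ t : Fin (j + 1) → α, q ^ #(univ.biUnion fun i => F (t i))
        = ∑ t : Fin j → α, ∑ x, q ^ #(F x ∪ univ.biUnion fun i => F (t i)) := by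
          rw [← (Fin.consEquiv fun _ => α).sum_comp, Fintype.sum_prod_type, sum_comm]
          refine sum_congr rfl fun t _ => sum_congr rfl fun x _ => ?_
          congr 2
          ext v
          simp [Fin.exists_fin_succ]
      _ = ∑ t : Fin j → α, q ^ #(univ.biUnion fun i => F (t i)) *
            ∑ x, q ^ #(F x \ univ.biUnion fun i => F (t i)) := by
          simp_rw [mul_sum, ← pow_add, ← card_sdiff_add_card, add_comm]
      _ ≤ ∑ t : Fin j → α, q ^ #(univ.biUnion fun i => F (t i)) * T := by
          gcongr with t
          refine hstep _ (card_biUnion_le.trans ?_)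
          calc ∑ i, #(F (t i)) ≤ ∑ _i : Fin j, s := sum_le_sum fun i _ => hF (t i)
            _ = s * j := by simp [mul_comm]
            _ ≤ s * k := Nat.mul_le_mul_left s (by omega)
      _ ≤ T ^ (j + 1) := by
          rw [← sum_mul, pow_succ]
          exact mul_le_mul_of_nonneg_right (ih (by omega)) hT

end Moments

section Graph

variable {V : Type*} [DecidableEq V]

lemma pow_card_toFinset_sdiff_le {e : Sym2 V} (he : ¬e.IsDiag) {q : ℝ} (hq0 : 0 ≤ q)
    (hq1 : q ≤ 1) (W : Finset V) :
    q ^ #(e.toFinset \ W) ≤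
      (if e ∈ W.sym2 then 1 else 0) + (if ∃ w ∈ W, w ∈ e then q else 0) + q ^ 2 := by
  by_cases hsub : e ∈ W.sym2
  · have hmeet_nonneg : (0 : ℝ) ≤ if ∃ w ∈ W, w ∈ e then q else 0 := by
      split_ifs <;> simp [hq0]
    simp only [if_pos hsub]
    nlinarith [pow_le_one₀ hq0 hq1 (n := #(e.toFinset \ W)), sq_nonneg q]
  by_cases hmeet : ∃ w ∈ W, w ∈ e
  · have hne : #(e.toFinset \ W) ≠ 0 := by
      rw [card_ne_zero, sdiff_nonempty]
      intro h
      exact hsub (mem_sym2_iff.mpr fun v hv => h (Sym2.mem_toFinset.mpr hv))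
    simp only [if_neg hsub, if_pos hmeet]
    nlinarith [pow_le_of_le_one hq0 hq1 hne, sq_nonneg q]
  · have hdisj : e.toFinset \ W = e.toFinset := by
      rw [Finset.sdiff_eq_self_iff_disjoint, disjoint_left]
      intro v hv hvW
      exact hmeet ⟨v, hvW, Sym2.mem_toFinset.mp hv⟩
    simp [hsub, hmeet, hdisj, Sym2.card_toFinset_of_not_isDiag e he]

lemma card_filter_mem_sym2_le (s : Finset (Sym2 V)) (W : Finset V) :
    #{e ∈ s | e ∈ W.sym2} ≤ #W ^ 2 :=
  calc #{e ∈ s | e ∈ W.sym2} ≤ #W.sym2 := card_le_card fun e he => (mem_filter.mp he).2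
    _ ≤ #(W ×ˢ W) := by rw [sym2_eq_image]; exact card_image_le
    _ = #W ^ 2 := by rw [card_product, sq]

variable [Fintype V] (G : SimpleGraph V) [DecidableRel G.Adj]

lemma card_filter_edge_meets_le (W : Finset V) :
    #{e ∈ G.edgeFinset | ∃ w ∈ W, w ∈ e} ≤ ∑ w ∈ W, G.degree w :=
  calc #{e ∈ G.edgeFinset | ∃ w ∈ W, w ∈ e} ≤ #(W.biUnion fun w => G.incidenceFinset w) := by
        refine card_le_card fun e he => ?_
        obtain ⟨he, w, hw, hwe⟩ := mem_filter.mp he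
        exact mem_biUnion.mpr
          ⟨w, hw, (G.mem_incidenceFinset ..).mpr ⟨G.mem_edgeFinset.mp he, hwe⟩⟩
    _ ≤ ∑ w ∈ W, #(G.incidenceFinset w) := card_biUnion_le
    _ = ∑ w ∈ W, G.degree w := by simp_rw [SimpleGraph.card_incidenceFinset_eq_degree]

lemma sum_edgeFinset_pow_card_sdiff_le {q : ℝ} (hq0 : 0 ≤ q) (hq1 : q ≤ 1) (W : Finset V) :
    ∑ e ∈ G.edgeFinset, q ^ #(e.toFinset \ W) ≤
      #W ^ 2 + q * ∑ w ∈ W, (G.degree w : ℝ) + q ^ 2 * #G.edgeFinset := by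
  have hpoint := fun e (he : e ∈ G.edgeFinset) =>
    pow_card_toFinset_sdiff_le (G.not_isDiag_of_mem_edgeSet (G.mem_edgeFinset.mp he)) hq0 hq1 W
  refine (sum_le_sum hpoint).trans ?_
  simp only [sum_add_distrib, sum_boole, ← sum_filter, sum_const, nsmul_eq_mul, mul_comm _ q]
  rw [mul_comm _ (q ^ 2)]
  gcongr ?_ + q * ?_ + _
  · exact_mod_cast card_filter_mem_sym2_le _ W
  · exact_mod_cast card_filter_edge_meets_le G W

lemma sum_edgeFinset_pow_card_sdiff_le_two_mul {p L : ℝ} (hp0 : 0 ≤ p) (hp1 : p ≤ 1)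
    (hL : 0 < L) (hedges : 400 * L ^ 2 ≤ p ^ 2 * #G.edgeFinset)
    (hdeg : ∀ u, (G.degree u : ℝ) ≤ #G.edgeFinset * p / (20 * L))
    {W : Finset V} (hW : (#W : ℝ) ≤ 4 * L) :
    ∑ e ∈ G.edgeFinset, p ^ #(e.toFinset \ W) ≤ 2 * (p ^ 2 * #G.edgeFinset) := by
  set m : ℝ := (#G.edgeFinset : ℝ)
  have hinside : (#W : ℝ) ^ 2 ≤ p ^ 2 * m / 25 := by nlinarith [(#W).cast_nonneg (α := ℝ)]
  have hmeet : p * ∑ w ∈ W, (G.degree w : ℝ) ≤ p ^ 2 * m / 5 :=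
    calc p * ∑ w ∈ W, (G.degree w : ℝ) ≤ p * (#W * (m * p / (20 * L))) := by
          gcongr
          simpa using sum_le_sum fun w (_ : w ∈ W) => hdeg w
      _ ≤ p * (4 * L * (m * p / (20 * L))) := by gcongr
      _ = p ^ 2 * m / 5 := by field_simp; ring
  have hm : 0 ≤ p ^ 2 * m := by positivity
  linarith [sum_edgeFinset_pow_card_sdiff_le G hp0 hp1 W]

def inducedEdgeCount (ω : V → Bool) : ℕ :=
  #{x : G.edgeFinset | ∀ v ∈ (x : Sym2 V).toFinset, ω v = true}

lemma ncard_edgeSet_forall_eq_true (ω : V → Bool) :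
    {e | e ∈ G.edgeSet ∧ ∀ v ∈ e, ω v = true}.ncard = inducedEdgeCount G ω := by
  rw [inducedEdgeCount, ← card_map (Function.Embedding.subtype _), ← Set.ncard_coe_finset]
  congr 1
  ext e
  simp [and_comm]

lemma lintegral_inducedEdgeCount_pow_le {p L : ℝ} (hp0 : 0 ≤ p) (hp1 : p ≤ 1) (hL : 0 < L)
    (hedges : 400 * L ^ 2 ≤ p ^ 2 * #G.edgeFinset)
    (hdeg : ∀ u, (G.degree u : ℝ) ≤ #G.edgeFinset * p / (20 * L)) {k : ℕ} (hk : (k : ℝ) ≤ 2 * L) :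
    ∫⁻ ω, (inducedEdgeCount G ω : ℝ≥0∞) ^ k ∂bernoulliPi V p hp1 ≤
      ENNReal.ofReal (2 * (p ^ 2 * #G.edgeFinset)) ^ k := by
  unfold inducedEdgeCount
  rw [lintegral_card_pow_eq_sum]
  simp_rw [bernoulliPi_forall_eq_true, ← ENNReal.ofReal_pow hp0]
  rw [← ENNReal.ofReal_sum_of_nonneg fun _ _ => by positivity,
    ← ENNReal.ofReal_pow (by positivity)]
  refine ENNReal.ofReal_le_ofReal <| sum_pow_card_biUnion_le hp0
    (fun x : G.edgeFinset => (x : Sym2 V).toFinset) (s := 2) (fun x => ?_) fun W hW => ?_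
  · rw [Sym2.card_toFinset]
    split_ifs <;> omega
  · rw [sum_coe_sort G.edgeFinset fun e => p ^ #(e.toFinset \ W)]
    refine sum_edgeFinset_pow_card_sdiff_le_two_mul G hp0 hp1 hL hedges hdeg ?_
    have : (#W : ℝ) ≤ 2 * k := by exact_mod_cast hW
    linarith

lemma measure_lt_inducedEdgeCount_le {p L : ℝ} (hp0 : 0 ≤ p) (hp1 : p ≤ 1) (hL : 0 < L)
    (hedges : 400 * L ^ 2 ≤ p ^ 2 * #G.edgeFinset)
    (hdeg : ∀ u, (G.degree u : ℝ) ≤ #G.edgeFinset * p / (20 * L)) {k : ℕ} (hk : (k : ℝ) ≤ 2 * L) :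
    bernoulliPi V p hp1 {ω | 6 * p ^ 2 * #G.edgeFinset < inducedEdgeCount G ω} ≤
      ENNReal.ofReal ((1 / 3) ^ k) := by
  have hm : 0 < p ^ 2 * #G.edgeFinset := by nlinarith
  have hratio : 2 * (p ^ 2 * #G.edgeFinset) / (6 * p ^ 2 * #G.edgeFinset) = 1 / 3 := by
    rw [div_eq_iff (by linarith)]
    ring
  rw [ENNReal.ofReal_pow (by norm_num), ← hratio]
  exact measure_lt_le_of_lintegral_pow_le (measurable_of_countable _) (by linarith)
    (lintegral_inducedEdgeCount_pow_le G hp0 hp1 hL hedges hdeg hk)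

end Graph

/-- There exists `n₀` such that for every finite simple graph `G` with `n ≥ n₀` vertices and
`m` edges and every `p ∈ (0, 1]`: if `p² m ≥ 400 (log₂ n)²` and every vertex has degree at
most `m p / (20 log₂ n)`, and a random subset `S` of the vertices is generated by including
each vertex independently with probability `p` (product Bernoulli measure on `V → Bool`),
then with probability at least `1 − 1/n` the number of edges with both endpoints in `S` is
at most `6 p² m`. -/
theorem stmt7 :
    ∃ n₀ : ℕ, ∀ (V : Type) [Fintype V] [DecidableEq V] (G : SimpleGraph V)
      [DecidableRel G.Adj] (p : ℝ) (hp0 : 0 < p) (hp1 : p ≤ 1),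
      n₀ ≤ Fintype.card V →
      400 * (Real.logb 2 (Fintype.card V)) ^ 2 ≤ p ^ 2 * (G.edgeFinset.card : ℝ) →
      (∀ u : V, (G.degree u : ℝ) ≤
          (G.edgeFinset.card : ℝ) * p / (20 * Real.logb 2 (Fintype.card V))) →
      ENNReal.ofReal (1 - 1 / (Fintype.card V : ℝ)) ≤
        Measure.pi
          (fun _ : V => (PMF.bernoulli (Real.toNNReal p)
            (Real.toNNReal_le_one.mpr hp1)).toMeasure)
          {ω : V → Bool |
            (({e | e ∈ G.edgeSet ∧ ∀ v ∈ e, ω v = true} : Set (Sym2 V)).ncard : ℝ)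
              ≤ 6 * p ^ 2 * (G.edgeFinset.card : ℝ)} := by
  refine ⟨2, fun V _ _ G _ p hp0 hp1 hn hedges hdeg => ?_⟩
  change _ ≤ bernoulliPi V p hp1 _
  have hn2 : (2 : ℝ) ≤ Fintype.card V := by exact_mod_cast hn
  have hL : 1 ≤ Real.logb 2 (Fintype.card V) :=
    (Real.le_logb_iff_rpow_le one_lt_two (by positivity)).mpr (by simpa using hn2)
  have hnk : (Fintype.card V : ℝ) ≤ 2 ^ ⌈Real.logb 2 (Fintype.card V)⌉₊ := by
    simpa using (Real.logb_le_iff_le_rpow one_lt_two (by positivity)).mp (Nat.le_ceil _)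
  generalize (Fintype.card V : ℝ) = n at *
  generalize Real.logb 2 n = L at *
  have hk : (⌈L⌉₊ : ℝ) ≤ 2 * L := by linarith [Nat.ceil_lt_add_one (by positivity : 0 ≤ L)]
  have htail := measure_lt_inducedEdgeCount_le G hp0.le hp1 (by positivity) hedges hdeg hk
  have hthird : ((1 : ℝ) / 3) ^ ⌈L⌉₊ ≤ 1 / n := by
    rw [one_div_pow]
    gcongr
    exact hnk.trans (by gcongr; norm_num)
  have hgood : {ω : V → Bool | (({e | e ∈ G.edgeSet ∧ ∀ v ∈ e, ω v = true} : Set (Sym2 V)).ncard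
      : ℝ) ≤ 6 * p ^ 2 * #G.edgeFinset} =
      {ω | 6 * p ^ 2 * #G.edgeFinset < inducedEdgeCount G ω}ᶜ := by
    ext ω
    simp [ncard_edgeSet_forall_eq_true]
  rw [hgood, prob_compl_eq_one_sub (Set.toFinite _).measurableSet,
    ENNReal.ofReal_sub _ (by positivity), ENNReal.ofReal_one]
  exact tsub_le_tsub_left (htail.trans (ENNReal.ofReal_le_ofReal hthird)) 1
end

section
/- The total number of intra-component edges incident to at least one bad vertex satisfies |E^new_1 ∪ ⋯ ∪ E^new_s| ≤ 2 |E^inter|. -/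
/-! Charge every edge of `⋃ i, Enew i` to one of its bad endpoints `v`: it lies in `Ecomp (c v)`, and
`v` has fewer such edges than inter-component ones. Summing over bad vertices is then bounded by the
handshake count `∑ v, degE Einter v ≤ 2 * Einter.ncard`. -/

open Finset

section IncidenceCount

variable {V : Type*} [Fintype V]

lemma Sym2.card_filter_mem_le_two [DecidableEq V] (e : Sym2 V) : #{u | u ∈ e} ≤ 2 := by
  induction e using Sym2.ind with
  | h a b =>
    calc #{u | u ∈ s(a, b)} = #{a, b} := by congr 1; ext; simp
      _ ≤ 2 := card_le_two

lemma sum_ncard_incident_le_two_mul (E : Set (Sym2 V)) :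
    ∑ u, {e ∈ E | u ∈ e}.ncard ≤ 2 * E.ncard := by
  classical
  set F := E.toFinite.toFinset
  have hF (u : V) : {e ∈ E | u ∈ e}.ncard = #(F.bipartiteAbove (fun u e => u ∈ e) u) := by
    simp [← Set.ncard_coe_finset, F]
  calc ∑ u, {e ∈ E | u ∈ e}.ncard
      = ∑ e ∈ F, #(univ.bipartiteBelow (fun u e => u ∈ e) e) := by
        simp only [hF, sum_card_bipartiteAbove_eq_sum_card_bipartiteBelow]
    _ ≤ ∑ _e ∈ F, 2 := sum_le_sum fun e _ => e.card_filter_mem_le_two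
    _ = 2 * E.ncard := by rw [sum_const, smul_eq_mul, mul_comm, Set.ncard_eq_toFinset_card E]

end IncidenceCount

theorem stmt9_general {V : Type*} [Fintype V] (G : SimpleGraph V) (s : ℕ) (c : V → Fin s)
    (Einter : Set (Sym2 V))
    (Ecomp : Fin s → Set (Sym2 V))
    (hEcomp : ∀ i, Ecomp i = {e | e ∈ G.edgeSet ∧ ∀ v ∈ e, c v = i})
    (degE : Set (Sym2 V) → V → ℕ)
    (hdegE : ∀ E' u, degE E' u = {e ∈ E' | u ∈ e}.ncard)
    (bad : V → Prop)
    (hbad : ∀ u, bad u ↔ degE (Ecomp (c u)) u < degE Einter u)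
    (Enew : Fin s → Set (Sym2 V))
    (hEnew : ∀ i, Enew i = {e ∈ Ecomp i | ∃ v ∈ e, bad v}) :
    (⋃ i, Enew i).ncard ≤ 2 * Einter.ncard := by
  classical
  set B : Finset V := {v | bad v}
  have hcover : (⋃ i, Enew i) ⊆ ⋃ v ∈ B, {e ∈ Ecomp (c v) | v ∈ e} := by
    simp only [Set.iUnion_subset_iff, hEnew]
    rintro i e ⟨he, v, hv, hbv⟩
    have hcv : c v = i := by rw [hEcomp] at he; exact he.2 v hv
    simp only [Set.mem_iUnion]
    exact ⟨v, by simpa [B] using hbv, hcv ▸ he, hv⟩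
  calc (⋃ i, Enew i).ncard
      ≤ (⋃ v ∈ B, {e ∈ Ecomp (c v) | v ∈ e}).ncard := Set.ncard_le_ncard hcover
    _ ≤ ∑ v ∈ B, degE (Ecomp (c v)) v := by simpa only [hdegE] using B.set_ncard_biUnion_le _
    _ ≤ ∑ v ∈ B, degE Einter v := sum_le_sum fun v hv => ((hbad v).1 (by simpa [B] using hv)).le
    _ ≤ ∑ v, degE Einter v := sum_le_sum_of_subset B.subset_univ
    _ ≤ 2 * Einter.ncard := by simpa only [hdegE] using sum_ncard_incident_le_two_mul Einter

/-- Let `G = (V, E)` be a finite simple graph and `c : V → {1, …, s}` a component assignment.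
`Einter` is the set of inter-component edges, `Ecomp i` the set of edges with both endpoints in
component `i`; a vertex `u` is bad if `deg_{Ecomp (c u)}(u) < deg_{Einter}(u)`, and `Enew i` is
the set of edges of `Ecomp i` incident to at least one bad vertex. Then the total number of
intra-component edges incident to at least one bad vertex satisfies
`|Enew 1 ∪ ⋯ ∪ Enew s| ≤ 2 |Einter|`. -/
theorem stmt9 {V : Type*} [Fintype V] (G : SimpleGraph V) (s : ℕ) (c : V → Fin s)
    (Einter : Set (Sym2 V))
    (hEinter : Einter = {e | e ∈ G.edgeSet ∧ ∃ a b, e = s(a, b) ∧ c a ≠ c b})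
    (Ecomp : Fin s → Set (Sym2 V))
    (hEcomp : ∀ i, Ecomp i = {e | e ∈ G.edgeSet ∧ ∀ v ∈ e, c v = i})
    (degE : Set (Sym2 V) → V → ℕ)
    (hdegE : ∀ E' u, degE E' u = {e ∈ E' | u ∈ e}.ncard)
    (bad : V → Prop)
    (hbad : ∀ u, bad u ↔ degE (Ecomp (c u)) u < degE Einter u)
    (Enew : Fin s → Set (Sym2 V))
    (hEnew : ∀ i, Enew i = {e ∈ Ecomp i | ∃ v ∈ e, bad v}) :
    (⋃ i, Enew i).ncard ≤ 2 * Einter.ncard :=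
  stmt9_general G s c Einter Ecomp hEcomp degE hdegE bad hbad Enew hEnew
end

section
/- The edge set E^new = E^inter ∪ E^new_1 ∪ ⋯ ∪ E^new_s satisfies |E^new| ≤ 3 |E^inter|; in particular, if |E^inter| ≤ |E|/10 then |E^new| ≤ (3/10)|E|. -/
/-!
Every edge of `E^new` that is not inter-component is charged to a bad endpoint `u`. All such
edges at `u` lie in `E_{c(u)}`, so there are fewer of them than inter-component edges at `u`.
Summing over vertices counts each inter-component edge at most twice, whence
`|E^new \ E^inter| ≤ 2 |E^inter|`.
-/

open Finset

namespace Sym2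

variable {V : Type*}

theorem sum_ncard_setOf_mem_le [Fintype V] (S : Set (Sym2 V)) :
    ∑ u, {e ∈ S | u ∈ e}.ncard ≤ 2 * S.ncard := by
  classical
  have hncard_eq : ∀ u, {e ∈ S | u ∈ e}.ncard = #(S.toFinset.bipartiteAbove (· ∈ ·) u) := by
    intro u
    rw [← Set.ncard_coe_finset, coe_bipartiteAbove]
    simp only [Set.mem_toFinset]
  have hcard : ∀ e : Sym2 V, #(univ.bipartiteBelow (· ∈ ·) e) ≤ 2 := by
    intro e
    have : univ.bipartiteBelow (· ∈ ·) e = e.toFinset := by ext; simp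
    rw [this, card_toFinset]
    split_ifs <;> omega
  calc ∑ u, {e ∈ S | u ∈ e}.ncard
      = ∑ e ∈ S.toFinset, #(univ.bipartiteBelow (· ∈ ·) e) := by
        simp only [hncard_eq]; exact sum_card_bipartiteAbove_eq_sum_card_bipartiteBelow _
    _ ≤ ∑ _e ∈ S.toFinset, 2 := sum_le_sum fun e _ ↦ hcard e
    _ = 2 * S.ncard := by rw [sum_const, smul_eq_mul, mul_comm, Set.ncard_eq_toFinset_card']

theorem ncard_le_sum_ncard_setOf_mem {N : Set (Sym2 V)} (B : Finset V)
    (hcover : ∀ e ∈ N, ∃ u ∈ B, u ∈ e) : N.ncard ≤ ∑ u ∈ B, {e ∈ N | u ∈ e}.ncard := by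
  have : N = ⋃ u ∈ B, {e ∈ N | u ∈ e} := by
    ext e
    simp only [Set.mem_iUnion, Set.mem_ofPred_eq, exists_prop]
    exact ⟨fun he ↦ (hcover e he).imp fun u hu ↦ ⟨hu.1, he, hu.2⟩, fun ⟨_, _, he, _⟩ ↦ he⟩
  conv_lhs => rw [this]
  exact B.set_ncard_biUnion_le _

theorem ncard_le_two_mul_of_locally_dominated [Fintype V] {T N : Set (Sym2 V)} (B : Finset V)
    (hcover : ∀ e ∈ N, ∃ u ∈ B, u ∈ e)
    (hdom : ∀ u ∈ B, {e ∈ N | u ∈ e}.ncard ≤ {e ∈ T | u ∈ e}.ncard) :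
    N.ncard ≤ 2 * T.ncard :=
  calc N.ncard ≤ ∑ u ∈ B, {e ∈ N | u ∈ e}.ncard := ncard_le_sum_ncard_setOf_mem B hcover
    _ ≤ ∑ u ∈ B, {e ∈ T | u ∈ e}.ncard := sum_le_sum hdom
    _ ≤ ∑ u, {e ∈ T | u ∈ e}.ncard := sum_le_sum_of_subset (subset_univ B)
    _ ≤ 2 * T.ncard := sum_ncard_setOf_mem_le T

theorem ncard_union_le_three_mul_of_locally_dominated [Fintype V] {T N : Set (Sym2 V)}
    (B : Finset V) (hcover : ∀ e ∈ N, ∃ u ∈ B, u ∈ e)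
    (hdom : ∀ u ∈ B, {e ∈ N | u ∈ e}.ncard ≤ {e ∈ T | u ∈ e}.ncard) :
    (T ∪ N).ncard ≤ 3 * T.ncard := by
  have := ncard_le_two_mul_of_locally_dominated B hcover hdom
  have := Set.ncard_union_le T N
  omega

end Sym2

theorem stmt10_general {V : Type*} [Fintype V] (G : SimpleGraph V) (s : ℕ) (c : V → Fin s)
    (Einter : Set (Sym2 V))
    (Ecomp : Fin s → Set (Sym2 V))
    (hEcomp : ∀ i, Ecomp i = {e | e ∈ G.edgeSet ∧ ∀ v ∈ e, c v = i})
    (degE : Set (Sym2 V) → V → ℕ)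
    (hdegE : ∀ E' u, degE E' u = {e ∈ E' | u ∈ e}.ncard)
    (bad : V → Prop)
    (hbad : ∀ u, bad u ↔ degE (Ecomp (c u)) u < degE Einter u)
    (Enew : Fin s → Set (Sym2 V))
    (hEnew : ∀ i, Enew i = {e ∈ Ecomp i | ∃ v ∈ e, bad v})
    (EnewTot : Set (Sym2 V))
    (hEnewTot : EnewTot = Einter ∪ ⋃ i, Enew i) :
    EnewTot.ncard ≤ 3 * Einter.ncard ∧
    ((Einter.ncard : ℝ) ≤ (G.edgeSet.ncard : ℝ) / 10 →
      (EnewTot.ncard : ℝ) ≤ 3 / 10 * (G.edgeSet.ncard : ℝ)) := by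
  classical
  have hcover : ∀ e ∈ ⋃ i, Enew i, ∃ u ∈ univ.filter bad, u ∈ e := by
    simp only [Set.mem_iUnion, hEnew, mem_filter, mem_univ, true_and]
    rintro e ⟨i, -, v, hv, hbad_v⟩
    exact ⟨v, hbad_v, hv⟩
  have hdom : ∀ u ∈ univ.filter bad,
      {e ∈ ⋃ i, Enew i | u ∈ e}.ncard ≤ {e ∈ Einter | u ∈ e}.ncard := by
    intro u hu
    have hlocal : {e ∈ ⋃ i, Enew i | u ∈ e} ⊆ {e ∈ Ecomp (c u) | u ∈ e} := by
      rintro e ⟨he, hue⟩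
      obtain ⟨i, hi⟩ := Set.mem_iUnion.mp he
      rw [hEnew] at hi
      have hcu : c u = i := by rw [hEcomp] at hi; exact hi.1.2 u hue
      exact ⟨hcu ▸ hi.1, hue⟩
    have hlt := (hbad u).mp (mem_filter.mp hu).2
    rw [hdegE, hdegE] at hlt
    exact (Set.ncard_le_ncard hlocal (Set.toFinite _)).trans hlt.le
  have key : EnewTot.ncard ≤ 3 * Einter.ncard := by
    rw [hEnewTot]
    exact Sym2.ncard_union_le_three_mul_of_locally_dominated _ hcover hdom
  refine ⟨key, fun h ↦ ?_⟩
  have : (EnewTot.ncard : ℝ) ≤ 3 * (Einter.ncard : ℝ) := by exact_mod_cast key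
  linarith

/-- Setup as in the expander decomposition: `G = (V, E)` a finite simple graph,
`c : V → {1, …, s}` a component assignment, `Einter` the inter-component edges, `Ecomp i` the
edges with both endpoints in component `i`, a vertex is bad if
`deg_{Ecomp (c u)}(u) < deg_{Einter}(u)`, `Enew i` the edges of `Ecomp i` incident to a bad
vertex, and `EnewTot = Einter ∪ Enew 1 ∪ ⋯ ∪ Enew s`. Then `|EnewTot| ≤ 3 |Einter|`; in
particular, if `|Einter| ≤ |E|/10` then `|EnewTot| ≤ (3/10)|E|`. -/
theorem stmt10 {V : Type*} [Fintype V] (G : SimpleGraph V) (s : ℕ) (c : V → Fin s)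
    (Einter : Set (Sym2 V))
    (hEinter : Einter = {e | e ∈ G.edgeSet ∧ ∃ a b, e = s(a, b) ∧ c a ≠ c b})
    (Ecomp : Fin s → Set (Sym2 V))
    (hEcomp : ∀ i, Ecomp i = {e | e ∈ G.edgeSet ∧ ∀ v ∈ e, c v = i})
    (degE : Set (Sym2 V) → V → ℕ)
    (hdegE : ∀ E' u, degE E' u = {e ∈ E' | u ∈ e}.ncard)
    (bad : V → Prop)
    (hbad : ∀ u, bad u ↔ degE (Ecomp (c u)) u < degE Einter u)
    (Enew : Fin s → Set (Sym2 V))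
    (hEnew : ∀ i, Enew i = {e ∈ Ecomp i | ∃ v ∈ e, bad v})
    (EnewTot : Set (Sym2 V))
    (hEnewTot : EnewTot = Einter ∪ ⋃ i, Enew i) :
    EnewTot.ncard ≤ 3 * Einter.ncard ∧
    ((Einter.ncard : ℝ) ≤ (G.edgeSet.ncard : ℝ) / 10 →
      (EnewTot.ncard : ℝ) ≤ 3 / 10 * (G.edgeSet.ncard : ℝ)) :=
  stmt10_general G s c Einter Ecomp hEcomp degE hdegE bad hbad Enew hEnew EnewTot hEnewTot
end
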